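/- arXiv:1610.09946 — 2 statements merged into one kernel-verified Lean document; each statement's English description precedes it below -/
import Mathlib

section
/- Let h : R^n → R be a function such that h(x) = |x|^{2-p} g1(x/|x|) for all x ≠ 0 (for some function g1 on the unit sphere and some p > 2), and also h(x) = |x - e|^{2-p} g2((x-e)/|x-e|) for all x ≠ e, where e is a fixed unit vector. Then for every x not in the line spanned by e and every real t with t < 1, h(x + t·e) = h(x). -/
/-!
Invariance under the `p`-homothety flow about a centre `c` means `h (c + r • (x - c)) = r ^ (2 - p) * h x`.
The translate `x + t • e` is the image of `(1 - t)⁻¹ • x` under the homothety of ratio `1 - t` about `e`,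
and `(1 - t)⁻¹ • x` is the image of `x` under the homothety of ratio `(1 - t)⁻¹` about `0`; the two
scaling factors `(1 - t) ^ (2 - p)` and `(1 - t)⁻¹ ^ (2 - p)` cancel.
-/

def IsHomogeneousAbout {E : Type*} [AddCommGroup E] [Module ℝ E] (a : ℝ) (c : E) (h : E → ℝ) :
    Prop :=
  ∀ x ≠ c, ∀ r : ℝ, 0 < r → h (c + r • (x - c)) = r ^ a * h x

theorem isHomogeneousAbout_of_eq_radial {E : Type*} [NormedAddCommGroup E] [NormedSpace ℝ E]
    {a : ℝ} {c : E} {h g : E → ℝ}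
    (hh : ∀ x ≠ c, h x = ‖x - c‖ ^ a * g (‖x - c‖⁻¹ • (x - c))) :
    IsHomogeneousAbout a c h := by
  intro x hx r hr
  have hxc : ‖x - c‖ ≠ 0 := norm_ne_zero_iff.2 (sub_ne_zero.2 hx)
  have hrx : c + r • (x - c) ≠ c := by
    simpa using smul_ne_zero hr.ne' (sub_ne_zero.2 hx)
  have hnorm : ‖r • (x - c)‖ = r * ‖x - c‖ := by rw [norm_smul, Real.norm_of_nonneg hr.le]
  have hdir : (r * ‖x - c‖)⁻¹ • r • (x - c) = ‖x - c‖⁻¹ • (x - c) := by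
    rw [smul_smul, mul_inv, mul_comm r⁻¹, mul_assoc, inv_mul_cancel₀ hr.ne', mul_one]
  rw [hh _ hrx, hh x hx, add_sub_cancel_left, hnorm, hdir,
    Real.mul_rpow hr.le (norm_nonneg _), mul_assoc]

theorem IsHomogeneousAbout.apply_add_smul {E : Type*} [AddCommGroup E] [Module ℝ E]
    {a : ℝ} {e : E} {h : E → ℝ}
    (h₀ : IsHomogeneousAbout a 0 h) (hₑ : IsHomogeneousAbout a e h)
    {x : E} (hx : x ∉ Submodule.span ℝ {e}) {t : ℝ} (ht : t < 1) :
    h (x + t • e) = h x := by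
  have hμ : 0 < 1 - t := sub_pos.2 ht
  set y : E := (1 - t)⁻¹ • x with hy
  have hx0 : x ≠ 0 := fun h0 => hx (h0 ▸ Submodule.zero_mem _)
  have hye : y ≠ e := by
    intro hye
    apply hx
    rw [← smul_inv_smul₀ hμ.ne' x, ← hy, hye]
    exact Submodule.smul_mem _ _ (Submodule.mem_span_singleton_self e)
  have hxt : x + t • e = e + (1 - t) • (y - e) := by
    rw [hy, smul_sub, smul_inv_smul₀ hμ.ne']
    module
  have hyx : y = 0 + (1 - t)⁻¹ • (x - 0) := by rw [zero_add, sub_zero]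
  calc h (x + t • e) = (1 - t) ^ a * h y := by rw [hxt, hₑ y hye _ hμ]
    _ = (1 - t) ^ a * ((1 - t)⁻¹ ^ a * h x) := by rw [hyx, h₀ x hx0 _ (inv_pos.2 hμ)]
    _ = h x := by
      rw [← mul_assoc, ← Real.mul_rpow hμ.le (inv_pos.2 hμ).le, mul_inv_cancel₀ hμ.ne',
        Real.one_rpow, one_mul]

theorem stmt0_general (n : ℕ) (p : ℝ)
    (h g1 g2 : EuclideanSpace ℝ (Fin n) → ℝ)
    (e : EuclideanSpace ℝ (Fin n))
    (h1 : ∀ x : EuclideanSpace ℝ (Fin n), x ≠ 0 →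
      h x = ‖x‖ ^ (2 - p) * g1 (‖x‖⁻¹ • x))
    (h2 : ∀ x : EuclideanSpace ℝ (Fin n), x ≠ e →
      h x = ‖x - e‖ ^ (2 - p) * g2 (‖x - e‖⁻¹ • (x - e)))
    (x : EuclideanSpace ℝ (Fin n)) (hx : x ∉ Submodule.span ℝ ({e} : Set (EuclideanSpace ℝ (Fin n))))
    (t : ℝ) (ht : t < 1) :
    h (x + t • e) = h x := by
  have h₀ : IsHomogeneousAbout (2 - p) 0 h :=
    isHomogeneousAbout_of_eq_radial (g := g1) fun x hx => by simpa using h1 x hx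
  exact h₀.apply_add_smul (isHomogeneousAbout_of_eq_radial h2) hx ht

/-- **Cone-splitting computation (Subcase 1.2, p > 2).**
If `h` is `p`-homothety invariant about `0` and about the unit vector `e`
(i.e. has the radial representations `h x = ‖x‖^(2-p) g1(x/‖x‖)` and
`h x = ‖x-e‖^(2-p) g2((x-e)/‖x-e‖)`), then `h` is invariant under translations
by `t • e` (with `t < 1`) at every point off the axis `span {e}`. -/
theorem stmt0 (n : ℕ) (p : ℝ) (hp : 2 < p)
    (h g1 g2 : EuclideanSpace ℝ (Fin n) → ℝ)
    (e : EuclideanSpace ℝ (Fin n)) (he : ‖e‖ = 1)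
    (h1 : ∀ x : EuclideanSpace ℝ (Fin n), x ≠ 0 →
      h x = ‖x‖ ^ (2 - p) * g1 (‖x‖⁻¹ • x))
    (h2 : ∀ x : EuclideanSpace ℝ (Fin n), x ≠ e →
      h x = ‖x - e‖ ^ (2 - p) * g2 (‖x - e‖⁻¹ • (x - e)))
    (x : EuclideanSpace ℝ (Fin n)) (hx : x ∉ Submodule.span ℝ ({e} : Set (EuclideanSpace ℝ (Fin n))))
    (t : ℝ) (ht : t < 1) :
    h (x + t • e) = h x :=
  stmt0_general n p h g1 g2 e h1 h2 x hx t ht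
end

section
/- Let h : R^n → R satisfy h(x) = Θ1·log|x| + g1(x/|x|) for x ≠ 0 and h(x) = Θ2·log|x - e| + g2((x-e)/|x-e|) for x ≠ e, where e is a unit vector, Θ1, Θ2 ≥ 0 are constants and g1, g2 are functions on the unit sphere. Suppose there exists a point x0 not on the line spanned by e with h(x0) finite. Then Θ1 = Θ2. -/
/-- **Cone-splitting principle, p = 2 case (equality of the logarithmic densities).**
If `h x = Θ1 log ‖x‖ + g1(x/‖x‖)` for `x ≠ 0`, `h x = Θ2 log ‖x-e‖ + g2((x-e)/‖x-e‖)`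
for `x ≠ e`, with `e` a unit vector, `Θ1, Θ2 ≥ 0`, and there is a point off the axis
`span {e}`, then `Θ1 = Θ2`. -/
theorem stmt2 (n : ℕ)
    (h g1 g2 : EuclideanSpace ℝ (Fin n) → ℝ)
    (e : EuclideanSpace ℝ (Fin n)) (he : ‖e‖ = 1)
    (Θ1 Θ2 : ℝ) (hΘ1 : 0 ≤ Θ1) (hΘ2 : 0 ≤ Θ2)
    (h1 : ∀ x : EuclideanSpace ℝ (Fin n), x ≠ 0 →
      h x = Θ1 * Real.log ‖x‖ + g1 (‖x‖⁻¹ • x))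
    (h2 : ∀ x : EuclideanSpace ℝ (Fin n), x ≠ e →
      h x = Θ2 * Real.log ‖x - e‖ + g2 (‖x - e‖⁻¹ • (x - e)))
    (hx0 : ∃ x0 : EuclideanSpace ℝ (Fin n),
      x0 ∉ Submodule.span ℝ ({e} : Set (EuclideanSpace ℝ (Fin n)))) :
    Θ1 = Θ2 := by
  obtain ⟨x0, hx0⟩ := hx0
  have key : ∀ x : EuclideanSpace ℝ (Fin n),
      x ∉ Submodule.span ℝ ({e} : Set (EuclideanSpace ℝ (Fin n))) →
      ∀ s : ℝ, 0 < s →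
        h (x + (1 - s⁻¹) • e) = h x + (Θ1 - Θ2) * Real.log s := by
    intro x hx s hs
    have hxe : ∀ t : ℝ, x ≠ t • e := by
      intro t ht
      exact hx (ht ▸ Submodule.smul_mem _ t (Submodule.mem_span_singleton_self e))
    have hx0' : x ≠ 0 := by
      intro hc
      exact hxe 0 (by simp [hc])
    have hsne : s ≠ 0 := ne_of_gt hs
    have hz : s • x ≠ e := by
      intro hc
      apply hxe s⁻¹
      rw [← hc, smul_smul, inv_mul_cancel₀ hsne, one_smul]
    have hnx : ‖x‖ ≠ 0 := norm_ne_zero_iff.mpr hx0'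
    have hnorm1 : ‖s • x‖ = s * ‖x‖ := by
      rw [norm_smul, Real.norm_eq_abs, abs_of_pos hs]
    have hdir1 : ‖s • x‖⁻¹ • (s • x) = ‖x‖⁻¹ • x := by
      rw [hnorm1, smul_smul]
      congr 1
      field_simp
    have hsx0 : s • x ≠ 0 := smul_ne_zero hsne hx0'
    have H1 : h (s • x) = h x + Θ1 * Real.log s := by
      rw [h1 _ hsx0, h1 _ hx0', hdir1, hnorm1, Real.log_mul hsne hnx]
      ring
    have hwsub : (x + (1 - s⁻¹) • e) - e = s⁻¹ • (s • x - e) := by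
      rw [smul_sub, smul_smul, inv_mul_cancel₀ hsne, one_smul]
      module
    have hze : s • x - e ≠ 0 := sub_ne_zero_of_ne hz
    have hwne : x + (1 - s⁻¹) • e ≠ e := by
      intro hc
      have h0 : (x + (1 - s⁻¹) • e) - e = 0 := sub_eq_zero_of_eq hc
      rw [hwsub] at h0
      rcases smul_eq_zero.mp h0 with h' | h'
      · exact inv_ne_zero hsne h'
      · exact hze h'
    have hnz : ‖s • x - e‖ ≠ 0 := norm_ne_zero_iff.mpr hze
    have hinvpos : (0:ℝ) < s⁻¹ := inv_pos.mpr hs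
    have hnorm2 : ‖(x + (1 - s⁻¹) • e) - e‖ = s⁻¹ * ‖s • x - e‖ := by
      rw [hwsub, norm_smul, Real.norm_eq_abs, abs_of_pos hinvpos]
    have hdir2 : ‖(x + (1 - s⁻¹) • e) - e‖⁻¹ • ((x + (1 - s⁻¹) • e) - e)
        = ‖s • x - e‖⁻¹ • (s • x - e) := by
      rw [hnorm2, hwsub, smul_smul]
      congr 1
      field_simp
    have H2 : h (x + (1 - s⁻¹) • e) = h (s • x) - Θ2 * Real.log s := by
      rw [h2 _ hwne, h2 _ hz, hdir2, hnorm2,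
        Real.log_mul (inv_ne_zero hsne) hnz, Real.log_inv]
      ring
    rw [H2, H1]
    ring
  have hx13 : x0 + (1/3 : ℝ) • e ∉ Submodule.span ℝ ({e} : Set (EuclideanSpace ℝ (Fin n))) := by
    intro hc
    apply hx0
    have := Submodule.sub_mem _ hc
      (Submodule.smul_mem _ (1/3 : ℝ) (Submodule.mem_span_singleton_self e))
    simpa using this
  have A := key x0 hx0 3 (by norm_num)
  have B := key x0 hx0 (3/2) (by norm_num)
  have C := key _ hx13 (3/2) (by norm_num)
  have hc1 : (1 - (3:ℝ)⁻¹) = 2/3 := by norm_num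
  have hc2 : (1 - ((3:ℝ)/2)⁻¹) = 1/3 := by norm_num
  rw [hc1] at A
  rw [hc2] at B
  rw [hc2] at C
  have hpt : x0 + (1/3 : ℝ) • e + (1/3 : ℝ) • e = x0 + (2/3 : ℝ) • e := by
    module
  rw [hpt] at C
  have h94 : (2:ℝ) * Real.log (3/2) = Real.log (9/4) := by
    rw [show (9/4:ℝ) = (3/2)^2 by norm_num, Real.log_pow]
    push_cast
    ring
  have e1 : (Θ1 - Θ2) * Real.log 3 = (Θ1 - Θ2) * Real.log (9/4) := by
    rw [← h94]
    linarith
  have hlt : Real.log (9/4) < Real.log 3 := Real.log_lt_log (by norm_num) (by norm_num)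
  by_contra hne
  have hd : Θ1 - Θ2 ≠ 0 := sub_ne_zero_of_ne hne
  have := mul_left_cancel₀ hd e1
  linarith
end
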